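/- Surjectivity of the extended normal trace, stated as a representation of boundary functionals (Proposition 6 of the paper, degree-0 case in a flat coordinate patch): Let W = {f ∈ L²(Ω) : f admits a weak gradient ∇_w f ∈ L²(Ω;ℝⁿ)}, equipped with the graph inner product ⟨f₁, f₂⟩_W = ⟨f₁, f₂⟩_{L²(Ω)} + ⟨∇_w f₁, ∇_w f₂⟩_{L²(Ω;ℝⁿ)}. Let F : W → ℝ be a linear functional that is bounded with respect to the graph norm and satisfies F(φ) = 0 for every smooth compactly supported φ : ℝⁿ → ℝ with support contained in Ω. Then there exist v ∈ L²(Ω;ℝⁿ) and h ∈ L²(Ω) such that h is a weak divergence of v and F(f) = ⟨∇_w f, v⟩_{L²(Ω;ℝⁿ)} + ⟨f, h⟩_{L²(Ω)} for every f ∈ W. -/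

import Mathlib

open MeasureTheory Filter Topology RealInnerProductSpace ENNReal

noncomputable section

/-- The (classical) divergence of a vector field on Euclidean space. -/
def diverg {n : ℕ} (v : EuclideanSpace ℝ (Fin n) → EuclideanSpace ℝ (Fin n))
    (x : EuclideanSpace ℝ (Fin n)) : ℝ :=
  ∑ i, fderiv ℝ v x (EuclideanSpace.single i 1) i

/-- `g` is a weak gradient of `f` on `Ω`. -/
def IsWeakGrad {n : ℕ} (Ω : Set (EuclideanSpace ℝ (Fin n)))
    (f : EuclideanSpace ℝ (Fin n) → ℝ)
    (g : EuclideanSpace ℝ (Fin n) → EuclideanSpace ℝ (Fin n)) : Prop :=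
  ∀ ψ : EuclideanSpace ℝ (Fin n) → EuclideanSpace ℝ (Fin n),
    ContDiff ℝ (⊤ : ℕ∞) ψ → HasCompactSupport ψ → tsupport ψ ⊆ Ω →
      ∫ x in Ω, f x * diverg ψ x = -∫ x in Ω, ⟪g x, ψ x⟫

/-- `h` is a weak divergence of `v` on `Ω`. -/
def IsWeakDiv {n : ℕ} (Ω : Set (EuclideanSpace ℝ (Fin n)))
    (v : EuclideanSpace ℝ (Fin n) → EuclideanSpace ℝ (Fin n))
    (h : EuclideanSpace ℝ (Fin n) → ℝ) : Prop :=
  ∀ φ : EuclideanSpace ℝ (Fin n) → ℝ,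
    ContDiff ℝ (⊤ : ℕ∞) φ → HasCompactSupport φ → tsupport φ ⊆ Ω →
      ∫ x in Ω, ⟪v x, gradient φ x⟫ = -∫ x in Ω, h x * φ x

/-- Membership in `W`: a representative `f ∈ L²(Ω)` together with a representative
`g ∈ L²(Ω;ℝⁿ)` of its weak gradient. -/
def InW {n : ℕ} (Ω : Set (EuclideanSpace ℝ (Fin n)))
    (f : EuclideanSpace ℝ (Fin n) → ℝ)
    (g : EuclideanSpace ℝ (Fin n) → EuclideanSpace ℝ (Fin n)) : Prop :=
  MemLp f 2 (volume.restrict Ω) ∧ MemLp g 2 (volume.restrict Ω) ∧ IsWeakGrad Ω f g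

set_option maxHeartbeats 1000000

namespace BFRaux

theorem pi_divergence_zero {m : ℕ} (u : (Fin (m + 1) → ℝ) → (Fin (m + 1) → ℝ))
    (hu : ContDiff ℝ (⊤ : ℕ∞) u) (h2u : HasCompactSupport u) :
    ∫ x, ∑ i, fderiv ℝ u x (Pi.single i 1) i = 0 := by
  obtain ⟨r, hr⟩ := h2u.isBounded.subset_closedBall 0
  set R : ℝ := |r| + 1 with hR
  have hR0 : 0 < R := by positivity
  have hrR : r < R := lt_of_le_of_lt (le_abs_self r) (by simp [hR])
  have hout : ∀ x : Fin (m + 1) → ℝ, x ∉ tsupport u → fderiv ℝ u x = 0 := by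
    intro x hx
    by_contra hne
    exact hx (support_fderiv_subset ℝ (Function.mem_support.2 hne))
  have hball : ∀ x : Fin (m + 1) → ℝ, R ≤ ‖x‖ → x ∉ tsupport u := by
    intro x hx hmem
    have := hr hmem
    rw [Metric.mem_closedBall, dist_zero_right] at this
    linarith
  have hle : (fun _ : Fin (m + 1) => -R) ≤ fun _ => R := fun i => by
    simp only; linarith
  have hcont : Continuous fun x => ∑ i, fderiv ℝ u x (Pi.single i 1) i := by
    refine continuous_finset_sum _ fun i _ => ?_
    exact (continuous_apply i).comp
      ((hu.continuous_fderiv (by simp)).clm_apply continuous_const)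
  have key := integral_divergence_of_hasFDerivAt_off_countable
    (fun _ : Fin (m + 1) => -R) (fun _ => R) hle u (fun x => fderiv ℝ u x) ∅
    Set.countable_empty hu.continuous.continuousOn
    (fun x _ => ((hu.differentiable (by simp)) x).hasFDerivAt)
    (hcont.continuousOn.integrableOn_compact isCompact_Icc)
  have hface : ∀ (i : Fin (m + 1)) (c : ℝ), |c| = R →
      ∀ y : Fin m → ℝ, u (i.insertNth c y) = 0 := by
    intro i c hc y
    set z : Fin (m + 1) → ℝ := i.insertNth c y with hz
    refine image_eq_zero_of_notMem_tsupport (hball z ?_)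
    have h := norm_le_pi_norm z i
    rw [hz, Fin.insertNth_apply_same] at h
    rw [Real.norm_eq_abs, hc] at h
    exact h
  have hRabs : |R| = R := abs_of_pos hR0
  have hRnegabs : |(-R)| = R := by rw [abs_neg]; exact hRabs
  have h0 : ∑ i : Fin (m + 1),
      ((∫ (x : Fin m → ℝ) in Set.Icc ((fun _ : Fin (m+1) => -R) ∘ i.succAbove)
          ((fun _ : Fin (m+1) => R) ∘ i.succAbove), u (i.insertNth R x) i) -
        ∫ (x : Fin m → ℝ) in Set.Icc ((fun _ : Fin (m+1) => -R) ∘ i.succAbove)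
          ((fun _ : Fin (m+1) => R) ∘ i.succAbove), u (i.insertNth (-R) x) i) = 0 := by
    refine Finset.sum_eq_zero fun i _ => ?_
    have hz1 : (fun y : Fin m → ℝ => u (i.insertNth R y) i) = fun _ => (0:ℝ) := by
      funext y; rw [hface i R hRabs y]; rfl
    have hz2 : (fun y : Fin m → ℝ => u (i.insertNth (-R) y) i) = fun _ => (0:ℝ) := by
      funext y; rw [hface i (-R) hRnegabs y]; rfl
    simp [hz1, hz2]
  have hcompl : ∀ x : Fin (m + 1) → ℝ,
      x ∉ Set.Icc (fun _ : Fin (m+1) => -R) (fun _ => R) →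
      (∑ i, fderiv ℝ u x (Pi.single i 1) i) = 0 := by
    intro x hx
    have hnx : x ∉ tsupport u := by
      refine hball x ?_
      by_contra hlt
      push_neg at hlt
      refine hx ⟨fun i => ?_, fun i => ?_⟩
      · have h := norm_le_pi_norm x i
        rw [Real.norm_eq_abs] at h
        have : |x i| < R := lt_of_le_of_lt h hlt
        simp only; linarith [neg_abs_le (x i)]
      · have h := norm_le_pi_norm x i
        rw [Real.norm_eq_abs] at h
        have : |x i| < R := lt_of_le_of_lt h hlt
        simp only; linarith [le_abs_self (x i)]
    rw [hout x hnx]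
    simp
  calc ∫ x, ∑ i, fderiv ℝ u x (Pi.single i 1) i
      = ∫ x in Set.Icc (fun _ : Fin (m+1) => -R) (fun _ => R),
          ∑ i, fderiv ℝ u x (Pi.single i 1) i :=
        (setIntegral_eq_integral_of_forall_compl_eq_zero hcompl).symm
    _ = 0 := key.trans h0


theorem integral_diverg_eq_zero {n : ℕ}
    (u : EuclideanSpace ℝ (Fin n) → EuclideanSpace ℝ (Fin n))
    (hu : ContDiff ℝ (⊤ : ℕ∞) u) (h2u : HasCompactSupport u) :
    ∫ x, diverg u x = 0 := by
  rcases Nat.eq_zero_or_pos n with hn | hn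
  · subst hn
    simp [diverg]
  obtain ⟨m, rfl⟩ : ∃ m, n = m + 1 := ⟨n - 1, (Nat.succ_pred_eq_of_pos hn).symm⟩
  set κ := EuclideanSpace.equiv (Fin (m + 1)) ℝ with hκ
  set w : (Fin (m + 1) → ℝ) → (Fin (m + 1) → ℝ) := fun y => κ (u (κ.symm y)) with hw
  have hwc : ContDiff ℝ (⊤ : ℕ∞) w := (κ.contDiff.comp hu).comp κ.symm.contDiff
  have h2w : HasCompactSupport w := by
    have h1 : HasCompactSupport (⇑κ ∘ u) := h2u.comp_left (map_zero κ)
    have := h1.comp_homeomorph κ.symm.toHomeomorph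
    simpa [Function.comp_def, hw] using this
  have hpi := pi_divergence_zero w hwc h2w
  have hmp := EuclideanSpace.volume_preserving_symm_measurableEquiv_toLp (Fin (m + 1))
  have hemb : MeasurableEmbedding ((MeasurableEquiv.toLp 2 (Fin (m + 1) → ℝ)).symm) :=
    ((MeasurableEquiv.toLp 2 (Fin (m + 1) → ℝ)).symm).measurableEmbedding
  have hcomp := hmp.integral_comp hemb (fun y => ∑ i, fderiv ℝ w y (Pi.single i 1) i)
  -- pointwise identification
  have hpt : ∀ x : EuclideanSpace ℝ (Fin (m + 1)),
      (∑ i, fderiv ℝ w ((MeasurableEquiv.toLp 2 (Fin (m + 1) → ℝ)).symm x) (Pi.single i 1) i)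
        = diverg u x := by
    intro x
    have hx : ((MeasurableEquiv.toLp 2 (Fin (m + 1) → ℝ)).symm x : Fin (m+1) → ℝ) = κ x := rfl
    have hfd : fderiv ℝ w (κ x) = (κ : EuclideanSpace ℝ (Fin (m+1)) →L[ℝ] (Fin (m+1) → ℝ)).comp
        ((fderiv ℝ u x).comp (κ.symm : (Fin (m+1) → ℝ) →L[ℝ] EuclideanSpace ℝ (Fin (m+1)))) := by
      have h1 : w = ⇑κ ∘ (u ∘ ⇑κ.symm) := rfl
      rw [h1, κ.comp_fderiv]
      congr 1
      have h3 := κ.symm.comp_right_fderiv (f := u) (x := κ x)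
      rw [h3, κ.symm_apply_apply]
    rw [hx, hfd, diverg]
    refine Finset.sum_congr rfl fun i _ => ?_
    simp only [ContinuousLinearMap.coe_comp', Function.comp_apply,
      ContinuousLinearEquiv.coe_coe]
    rfl
  rw [← hpi, ← hcomp]
  exact integral_congr_ae (Filter.Eventually.of_forall fun x => (hpt x).symm)

theorem inner_grad {φ : EuclideanSpace ℝ (Fin n) → ℝ} (x v : EuclideanSpace ℝ (Fin n)) :
    ⟪gradient φ x, v⟫ = fderiv ℝ φ x v := by
  rw [gradient, InnerProductSpace.toDual_symm_apply]

theorem grad_apply {φ : EuclideanSpace ℝ (Fin n) → ℝ} (x : EuclideanSpace ℝ (Fin n))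
    (i : Fin n) : gradient φ x i = fderiv ℝ φ x (EuclideanSpace.single i 1) := by
  rw [← inner_grad x (EuclideanSpace.single i 1)]
  rw [EuclideanSpace.inner_single_right]
  simp

theorem grad_continuous {φ : EuclideanSpace ℝ (Fin n) → ℝ} (hφ : ContDiff ℝ (⊤ : ℕ∞) φ) :
    Continuous (gradient φ) := by
  have : gradient φ = fun x => (InnerProductSpace.toDual ℝ _).symm (fderiv ℝ φ x) := rfl
  rw [this]
  exact (InnerProductSpace.toDual ℝ _).symm.continuous.comp (hφ.continuous_fderiv (by simp))

theorem grad_compact_support {φ : EuclideanSpace ℝ (Fin n) → ℝ} (h2φ : HasCompactSupport φ) :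
    HasCompactSupport (gradient φ) := by
  refine h2φ.mono' ?_
  intro x hx
  simp only [Function.mem_support, ne_eq] at hx
  by_contra hns
  apply hx
  rw [gradient, show fderiv ℝ φ x = 0 from ?_, map_zero]
  by_contra hne
  exact hns (support_fderiv_subset ℝ (Function.mem_support.2 hne))

theorem diverg_continuous {ψ : EuclideanSpace ℝ (Fin n) → EuclideanSpace ℝ (Fin n)}
    (hψ : ContDiff ℝ (⊤ : ℕ∞) ψ) : Continuous (diverg ψ) := by
  refine continuous_finset_sum _ fun i _ => ?_
  exact (continuous_apply i).comp ((PiLp.continuous_ofLp ..).comp ((hψ.continuous_fderiv (by simp)).clm_apply continuous_const))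

theorem diverg_compact_support {ψ : EuclideanSpace ℝ (Fin n) → EuclideanSpace ℝ (Fin n)}
    (h2ψ : HasCompactSupport ψ) : HasCompactSupport (diverg ψ) := by
  refine h2ψ.mono' ?_
  intro x hx
  simp only [Function.mem_support, ne_eq] at hx
  by_contra hns
  apply hx
  rw [diverg, show fderiv ℝ ψ x = 0 from ?_]
  · simp
  by_contra hne
  exact hns (support_fderiv_subset ℝ (Function.mem_support.2 hne))

theorem diverg_smul {φ : EuclideanSpace ℝ (Fin n) → ℝ}
    {ψ : EuclideanSpace ℝ (Fin n) → EuclideanSpace ℝ (Fin n)}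
    (hφ : ContDiff ℝ (⊤ : ℕ∞) φ) (hψ : ContDiff ℝ (⊤ : ℕ∞) ψ) (x : EuclideanSpace ℝ (Fin n)) :
    diverg (fun y => φ y • ψ y) x = φ x * diverg ψ x + ⟪gradient φ x, ψ x⟫ := by
  rw [diverg, diverg]
  have hfd := fderiv_fun_smul ((hφ.differentiable (by simp)) x) ((hψ.differentiable (by simp)) x)
  simp only [hfd]
  rw [PiLp.inner_apply]
  rw [Finset.mul_sum, ← Finset.sum_add_distrib]
  refine Finset.sum_congr rfl fun i _ => ?_
  simp only [ContinuousLinearMap.add_apply, ContinuousLinearMap.coe_smul',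
    Pi.smul_apply, ContinuousLinearMap.smulRight_apply]
  rw [grad_apply]
  simp only [PiLp.add_apply, PiLp.smul_apply, smul_eq_mul, RCLike.inner_apply, conj_trivial]
  ring

/-- Integration by parts: `gradient φ` is a weak gradient of `φ` for any smooth
compactly supported `φ`. -/
theorem isWeakGrad_of_smooth {Ω : Set (EuclideanSpace ℝ (Fin n))}
    {φ : EuclideanSpace ℝ (Fin n) → ℝ}
    (hφ : ContDiff ℝ (⊤ : ℕ∞) φ) (h2φ : HasCompactSupport φ) :
    IsWeakGrad Ω φ (gradient φ) := by
  intro ψ hψ h2ψ hsψ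
  have hA : ∫ x in Ω, φ x * diverg ψ x = ∫ x, φ x * diverg ψ x := by
    refine setIntegral_eq_integral_of_forall_compl_eq_zero fun x hx => ?_
    have : x ∉ tsupport ψ := fun hmem => hx (hsψ hmem)
    have hd : diverg ψ x = 0 := by
      rw [diverg, show fderiv ℝ ψ x = 0 from ?_]
      · simp
      by_contra hne
      exact this (support_fderiv_subset ℝ (Function.mem_support.2 hne))
    rw [hd, mul_zero]
  have hB : ∫ x in Ω, ⟪gradient φ x, ψ x⟫ = ∫ x, ⟪gradient φ x, ψ x⟫ := by
    refine setIntegral_eq_integral_of_forall_compl_eq_zero fun x hx => ?_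
    have : ψ x = 0 := image_eq_zero_of_notMem_tsupport fun hmem => hx (hsψ hmem)
    rw [this, inner_zero_right]
  have hu : ContDiff ℝ (⊤ : ℕ∞) fun y => φ y • ψ y := by exact hφ.smul hψ
  have h2u : HasCompactSupport fun y => φ y • ψ y :=
    h2ψ.mono fun x hx => by
      simp only [Function.mem_support, ne_eq] at hx ⊢
      exact fun h => hx (by rw [h, smul_zero])
  have hz := integral_diverg_eq_zero _ hu h2u
  have hsplit : ∫ x, diverg (fun y => φ y • ψ y) x
      = (∫ x, φ x * diverg ψ x) + ∫ x, ⟪gradient φ x, ψ x⟫ := by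
    rw [← integral_add]
    · exact integral_congr_ae (Filter.Eventually.of_forall fun x => diverg_smul hφ hψ x)
    · exact ((hφ.continuous.mul (diverg_continuous hψ)).integrable_of_hasCompactSupport
        ((diverg_compact_support h2ψ).mul_left))
    · refine (Continuous.integrable_of_hasCompactSupport ?_ ?_)
      · exact (grad_continuous hφ).inner hψ.continuous
      · refine HasCompactSupport.mono' h2ψ ?_
        intro x hx
        by_contra hns
        exact (Function.mem_support.mp hx)
          (by rw [image_eq_zero_of_notMem_tsupport hns, inner_zero_right])
  rw [hA, hB]
  rw [hsplit] at hz
  linarith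

variable {n : ℕ} {Ω : Set (EuclideanSpace ℝ (Fin n))}

theorem integrable_inner_L2 {E' : Type*} [NormedAddCommGroup E'] [InnerProductSpace ℝ E']
    {μ : Measure (EuclideanSpace ℝ (Fin n))}
    {f g : EuclideanSpace ℝ (Fin n) → E'} (hf : MemLp f 2 μ) (hg : MemLp g 2 μ) :
    Integrable (fun x => (inner ℝ (f x) (g x) : ℝ)) μ := by
  have := MeasureTheory.L2.integrable_inner (𝕜 := ℝ) (hf.toLp f) (hg.toLp g)
  refine this.congr ?_
  filter_upwards [hf.coeFn_toLp, hg.coeFn_toLp] with x h1 h2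
  rw [h1, h2]

theorem integrable_mul_L2 {μ : Measure (EuclideanSpace ℝ (Fin n))}
    {f g : EuclideanSpace ℝ (Fin n) → ℝ} (hf : MemLp f 2 μ) (hg : MemLp g 2 μ) :
    Integrable (fun x => f x * g x) μ := by
  have := integrable_inner_L2 hf hg
  refine this.congr (Eventually.of_forall fun x => ?_)
  simp only [RCLike.inner_apply, conj_trivial]
  ring

theorem memL2_of_cont_cs {E' : Type*} [NormedAddCommGroup E']
    {f : EuclideanSpace ℝ (Fin n) → E'} (hf : Continuous f) (h2f : HasCompactSupport f) :
    MemLp f 2 (volume.restrict Ω) :=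
  (hf.memLp_of_hasCompactSupport (μ := volume) h2f).restrict Ω

theorem isWeakGrad_congr {f f' : EuclideanSpace ℝ (Fin n) → ℝ}
    {g g' : EuclideanSpace ℝ (Fin n) → EuclideanSpace ℝ (Fin n)}
    (hf : f =ᵐ[volume.restrict Ω] f') (hg : g =ᵐ[volume.restrict Ω] g')
    (h : IsWeakGrad Ω f g) : IsWeakGrad Ω f' g' := by
  intro ψ hψ h2ψ hsψ
  have e1 : ∫ x in Ω, f' x * diverg ψ x = ∫ x in Ω, f x * diverg ψ x :=
    integral_congr_ae (hf.mono fun x hx => by simp only [hx])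
  have e2 : ∫ x in Ω, ⟪g' x, ψ x⟫ = ∫ x in Ω, ⟪g x, ψ x⟫ :=
    integral_congr_ae (hg.mono fun x hx => by simp only [hx])
  rw [e1, e2]
  exact h ψ hψ h2ψ hsψ

theorem isWeakGrad_zero : IsWeakGrad Ω (0 : EuclideanSpace ℝ (Fin n) → ℝ) 0 := by
  intro ψ hψ h2ψ hsψ
  simp

theorem isWeakGrad_add {f₁ f₂ : EuclideanSpace ℝ (Fin n) → ℝ}
    {g₁ g₂ : EuclideanSpace ℝ (Fin n) → EuclideanSpace ℝ (Fin n)}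
    (hf₁ : MemLp f₁ 2 (volume.restrict Ω)) (hg₁ : MemLp g₁ 2 (volume.restrict Ω))
    (hf₂ : MemLp f₂ 2 (volume.restrict Ω)) (hg₂ : MemLp g₂ 2 (volume.restrict Ω))
    (h₁ : IsWeakGrad Ω f₁ g₁) (h₂ : IsWeakGrad Ω f₂ g₂) :
    IsWeakGrad Ω (f₁ + f₂) (g₁ + g₂) := by
  intro ψ hψ h2ψ hsψ
  have hd2 : MemLp (diverg ψ) 2 (volume.restrict Ω) :=
    memL2_of_cont_cs (diverg_continuous hψ) (diverg_compact_support h2ψ)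
  have hψ2 : MemLp ψ 2 (volume.restrict Ω) := memL2_of_cont_cs hψ.continuous h2ψ
  have e1 : ∫ x in Ω, (f₁ + f₂) x * diverg ψ x
      = (∫ x in Ω, f₁ x * diverg ψ x) + ∫ x in Ω, f₂ x * diverg ψ x := by
    simp_rw [Pi.add_apply, add_mul]
    exact integral_add (integrable_mul_L2 hf₁ hd2) (integrable_mul_L2 hf₂ hd2)
  have e2 : ∫ x in Ω, ⟪(g₁ + g₂) x, ψ x⟫
      = (∫ x in Ω, ⟪g₁ x, ψ x⟫) + ∫ x in Ω, ⟪g₂ x, ψ x⟫ := by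
    simp_rw [Pi.add_apply, inner_add_left]
    exact integral_add (integrable_inner_L2 hg₁ hψ2) (integrable_inner_L2 hg₂ hψ2)
  rw [e1, e2, h₁ ψ hψ h2ψ hsψ, h₂ ψ hψ h2ψ hsψ]
  ring

theorem isWeakGrad_smul {f : EuclideanSpace ℝ (Fin n) → ℝ}
    {g : EuclideanSpace ℝ (Fin n) → EuclideanSpace ℝ (Fin n)} (c : ℝ)
    (h : IsWeakGrad Ω f g) : IsWeakGrad Ω (c • f) (c • g) := by
  intro ψ hψ h2ψ hsψ
  have e1 : ∫ x in Ω, (c • f) x * diverg ψ x = c * ∫ x in Ω, f x * diverg ψ x := by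
    simp_rw [Pi.smul_apply, smul_eq_mul, mul_assoc]
    exact integral_const_mul c _
  have e2 : ∫ x in Ω, ⟪(c • g) x, ψ x⟫ = c * ∫ x in Ω, ⟪g x, ψ x⟫ := by
    simp_rw [Pi.smul_apply, real_inner_smul_left]
    exact integral_const_mul c _
  rw [e1, e2, h ψ hψ h2ψ hsψ]
  ring

/-- The ambient Hilbert space `L² × L²` with the graph (product) inner product. -/
abbrev Hsp (Ω : Set (EuclideanSpace ℝ (Fin n))) : Type :=
  WithLp 2 ((Lp ℝ 2 (volume.restrict Ω))
    × (Lp (EuclideanSpace ℝ (Fin n)) 2 (volume.restrict Ω)))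

/-- The subspace `W` of `L² × L²` consisting of pairs (f, ∇_w f). -/
def Ssub (Ω : Set (EuclideanSpace ℝ (Fin n))) : Submodule ℝ (Hsp Ω) where
  carrier := {x | IsWeakGrad Ω (⇑((WithLp.equiv 2 _ x).1)) (⇑((WithLp.equiv 2 _ x).2))}
  zero_mem' := by
    refine isWeakGrad_congr ?_ ?_ (isWeakGrad_zero (Ω := Ω))
    · exact (Lp.coeFn_zero ℝ 2 _).symm
    · exact (Lp.coeFn_zero (EuclideanSpace ℝ (Fin n)) 2 _).symm
  add_mem' := by
    intro x y hx hy
    refine isWeakGrad_congr (Lp.coeFn_add _ _).symm (Lp.coeFn_add _ _).symm ?_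
    exact isWeakGrad_add (Lp.memLp _) (Lp.memLp _) (Lp.memLp _) (Lp.memLp _) hx hy
  smul_mem' := by
    intro c x hx
    refine isWeakGrad_congr (Lp.coeFn_smul _ _).symm (Lp.coeFn_smul _ _).symm ?_
    exact isWeakGrad_smul c hx

theorem mem_Ssub {x : Hsp Ω} :
    x ∈ Ssub Ω ↔ IsWeakGrad Ω (⇑((WithLp.equiv 2 _ x).1)) (⇑((WithLp.equiv 2 _ x).2)) :=
  Iff.rfl

theorem norm_Hsp (x : Hsp Ω) :
    ‖x‖ = Real.sqrt ((∫ y in Ω, ((⇑((WithLp.equiv 2 _ x).1) : _ → ℝ) y) ^ 2)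
      + ∫ y in Ω, ‖(⇑((WithLp.equiv 2 _ x).2)) y‖ ^ 2) := by
  rw [norm_eq_sqrt_real_inner]
  congr 1
  rw [WithLp.prod_inner_apply, L2.inner_def, L2.inner_def]
  congr 1
  · refine integral_congr_ae (Eventually.of_forall fun y => ?_)
    simp only [RCLike.inner_apply, conj_trivial]
    rw [show ((WithLp.equiv 2 _) x).1 = (WithLp.ofLp x).1 from rfl]
    ring
  · refine integral_congr_ae (Eventually.of_forall fun y => ?_)
    simp only [real_inner_self_eq_norm_sq]
    rw [show ((WithLp.equiv 2 _) x).2 = (WithLp.ofLp x).2 from rfl]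


theorem F_congr_thm
    (F : (EuclideanSpace ℝ (Fin n) → ℝ) →
      (EuclideanSpace ℝ (Fin n) → EuclideanSpace ℝ (Fin n)) → ℝ)
    (hadd : ∀ f₁ g₁ f₂ g₂, InW Ω f₁ g₁ → InW Ω f₂ g₂ →
      F (f₁ + f₂) (g₁ + g₂) = F f₁ g₁ + F f₂ g₂)
    (C : ℝ)
    (hbound : ∀ f g, InW Ω f g →
      |F f g| ≤ C * Real.sqrt ((∫ x in Ω, (f x) ^ 2) + ∫ x in Ω, ‖g x‖ ^ 2))
    (f : EuclideanSpace ℝ (Fin n) → ℝ)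
    (g : EuclideanSpace ℝ (Fin n) → EuclideanSpace ℝ (Fin n))
    (f' : EuclideanSpace ℝ (Fin n) → ℝ)
    (g' : EuclideanSpace ℝ (Fin n) → EuclideanSpace ℝ (Fin n))
    (hfg : InW Ω f g) (hf' : f' =ᵐ[volume.restrict Ω] f) (hg' : g' =ᵐ[volume.restrict Ω] g) :
    F f' g' = F f g := by
  set d : EuclideanSpace ℝ (Fin n) → ℝ := f' - f with hd
  set e : EuclideanSpace ℝ (Fin n) → EuclideanSpace ℝ (Fin n) := g' - g with he
  have hd0 : d =ᵐ[volume.restrict Ω] 0 := by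
    filter_upwards [hf'] with x hx
    simp [hd, hx]
  have he0 : e =ᵐ[volume.restrict Ω] 0 := by
    filter_upwards [hg'] with x hx
    simp [he, hx]
  have hdW : InW Ω d e := by
    refine ⟨MemLp.zero.ae_eq hd0.symm, MemLp.zero.ae_eq he0.symm, ?_⟩
    exact isWeakGrad_congr hd0.symm he0.symm (isWeakGrad_zero (Ω := Ω))
  have hfd : f + d = f' := by funext x; simp [hd]
  have hge : g + e = g' := by funext x; simp [he]
  have hF0 : F d e = 0 := by
    have hb := hbound d e hdW
    have h1 : ∫ x in Ω, (d x) ^ 2 = 0 := by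
      have h1' : (fun x => (d x) ^ 2) =ᵐ[volume.restrict Ω] fun _ => (0:ℝ) :=
        hd0.mono fun x hx => by simp [hx]
      rw [integral_congr_ae h1', integral_zero]
    have h2 : ∫ x in Ω, ‖e x‖ ^ 2 = 0 := by
      have h2' : (fun x => ‖e x‖ ^ 2) =ᵐ[volume.restrict Ω] fun _ => (0:ℝ) :=
        he0.mono fun x hx => by simp [hx]
      rw [integral_congr_ae h2', integral_zero]
    rw [h1, h2] at hb
    simp only [add_zero, Real.sqrt_zero, mul_zero] at hb
    exact abs_eq_zero.mp (le_antisymm hb (abs_nonneg _))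
  calc F f' g' = F (f + d) (g + e) := by rw [hfd, hge]
    _ = F f g + F d e := hadd f g d e hfg hdW
    _ = F f g := by rw [hF0, add_zero]


end BFRaux

open BFRaux

/-- **Surjectivity of the extended normal trace, as a representation of boundary
functionals.** Let `W = {f ∈ L²(Ω) : ∇_w f ∈ L²(Ω;ℝⁿ)}` with the graph inner product.
Any linear functional `F` on `W` which is bounded in the graph norm and vanishes on
smooth compactly supported functions supported in `Ω` is represented as
`F(f) = ⟨∇_w f, v⟩ + ⟨f, h⟩` with `h` a weak divergence of `v`. -/
theorem boundary_functional_representation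
    (n : ℕ) (hn : 1 ≤ n) (Ω : Set (EuclideanSpace ℝ (Fin n))) (hΩ : IsOpen Ω)
    (F : (EuclideanSpace ℝ (Fin n) → ℝ) →
      (EuclideanSpace ℝ (Fin n) → EuclideanSpace ℝ (Fin n)) → ℝ)
    -- `F` is linear on `W` (acting on representatives of elements of `W`):
    (hadd : ∀ f₁ g₁ f₂ g₂, InW Ω f₁ g₁ → InW Ω f₂ g₂ →
      F (f₁ + f₂) (g₁ + g₂) = F f₁ g₁ + F f₂ g₂)
    (hsmul : ∀ (c : ℝ) f g, InW Ω f g → F (c • f) (c • g) = c * F f g)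
    -- `F` is bounded with respect to the graph norm:
    (C : ℝ)
    (hbound : ∀ f g, InW Ω f g →
      |F f g| ≤ C * Real.sqrt ((∫ x in Ω, (f x) ^ 2) + ∫ x in Ω, ‖g x‖ ^ 2))
    -- `F` vanishes on smooth compactly supported functions with support in `Ω`:
    (hvanish : ∀ φ : EuclideanSpace ℝ (Fin n) → ℝ,
      ContDiff ℝ (⊤ : ℕ∞) φ → HasCompactSupport φ → tsupport φ ⊆ Ω → F φ (gradient φ) = 0) :
    ∃ (v : EuclideanSpace ℝ (Fin n) → EuclideanSpace ℝ (Fin n))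
      (h : EuclideanSpace ℝ (Fin n) → ℝ),
        MemLp v 2 (volume.restrict Ω) ∧ MemLp h 2 (volume.restrict Ω) ∧
        IsWeakDiv Ω v h ∧
        ∀ f g, InW Ω f g →
          F f g = (∫ x in Ω, ⟪g x, v x⟫) + ∫ x in Ω, f x * h x := by
  classical
  -- the bounded linear functional on the subspace `Ssub Ω`
  have hInWc : ∀ x : Hsp Ω, x ∈ Ssub Ω →
      InW Ω (⇑((WithLp.equiv 2 _ x).1)) (⇑((WithLp.equiv 2 _ x).2)) :=
    fun x hx => ⟨Lp.memLp _, Lp.memLp _, hx⟩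
  let Flin : Ssub Ω →ₗ[ℝ] ℝ :=
    { toFun := fun p => F (⇑((WithLp.equiv 2 _ p.val).1)) (⇑((WithLp.equiv 2 _ p.val).2))
      map_add' := by
        intro p q
        have h1 : F (⇑((WithLp.equiv 2 _ (p.val + q.val)).1))
            (⇑((WithLp.equiv 2 _ (p.val + q.val)).2))
            = F (⇑((WithLp.equiv 2 _ p.val).1) + ⇑((WithLp.equiv 2 _ q.val).1))
              (⇑((WithLp.equiv 2 _ p.val).2) + ⇑((WithLp.equiv 2 _ q.val).2)) := by
          simp only [WithLp.equiv_apply, WithLp.ofLp_add, Prod.fst_add, Prod.snd_add]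
          refine F_congr_thm F hadd C hbound _ _ _ _
            ⟨MemLp.add (Lp.memLp _) (Lp.memLp _), MemLp.add (Lp.memLp _) (Lp.memLp _),
              isWeakGrad_add (Lp.memLp _) (Lp.memLp _) (Lp.memLp _) (Lp.memLp _) p.2 q.2⟩
            (Lp.coeFn_add _ _) (Lp.coeFn_add _ _)
        have h2 := hadd _ _ _ _ (hInWc p.val p.2) (hInWc q.val q.2)
        show F (⇑((WithLp.equiv 2 _ (p.val + q.val)).1))
            (⇑((WithLp.equiv 2 _ (p.val + q.val)).2)) = _
        rw [h1, h2]
      map_smul' := by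
        intro c p
        have h1 : F (⇑((WithLp.equiv 2 _ (c • p.val : Hsp Ω)).1))
            (⇑((WithLp.equiv 2 _ (c • p.val : Hsp Ω)).2))
            = F (c • ⇑((WithLp.equiv 2 _ p.val).1)) (c • ⇑((WithLp.equiv 2 _ p.val).2)) := by
          refine F_congr_thm F hadd C hbound _ _ _ _
            ⟨MemLp.const_smul (Lp.memLp _) c, MemLp.const_smul (Lp.memLp _) c, isWeakGrad_smul c p.2⟩
            (Lp.coeFn_smul _ _) (Lp.coeFn_smul _ _)
        have h2 := hsmul c _ _ (hInWc p.val p.2)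
        show F (⇑((WithLp.equiv 2 _ (c • p.val : Hsp Ω)).1))
            (⇑((WithLp.equiv 2 _ (c • p.val : Hsp Ω)).2)) = _
        rw [h1, h2]
        rfl }
  have hFlin_bound : ∀ p : Ssub Ω, ‖Flin p‖ ≤ C * ‖p‖ := by
    intro p
    have hb := hbound _ _ (hInWc p.val p.2)
    rw [Real.norm_eq_abs]
    calc |Flin p| ≤ C * Real.sqrt ((∫ x in Ω, ((⇑((WithLp.equiv 2 _ p.val).1) : _ → ℝ) x) ^ 2)
        + ∫ x in Ω, ‖(⇑((WithLp.equiv 2 _ p.val).2)) x‖ ^ 2) := hb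
      _ = C * ‖p.val‖ := by rw [norm_Hsp p.val]
      _ = C * ‖p‖ := rfl
  let Fcont : Ssub Ω →L[ℝ] ℝ := LinearMap.mkContinuous Flin C hFlin_bound
  obtain ⟨G, hG, -⟩ := exists_extension_norm_eq (Ssub Ω) Fcont
  set y : Hsp Ω := (InnerProductSpace.toDual ℝ (Hsp Ω)).symm G with hy
  set hL : Lp ℝ 2 (volume.restrict Ω) := (WithLp.equiv 2 _ y).1 with hhL
  set vL : Lp (EuclideanSpace ℝ (Fin n)) 2 (volume.restrict Ω) := (WithLp.equiv 2 _ y).2 with hvL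
  have hrep : ∀ f g, InW Ω f g →
      F f g = (∫ x in Ω, ⟪g x, (⇑vL) x⟫) + ∫ x in Ω, f x * (⇑hL) x := by
    intro f g hfg
    set f' : Lp ℝ 2 (volume.restrict Ω) := hfg.1.toLp f with hf'
    set g' : Lp (EuclideanSpace ℝ (Fin n)) 2 (volume.restrict Ω) := hfg.2.1.toLp g with hg'
    set xH : Hsp Ω := (WithLp.equiv 2 _).symm (f', g') with hxH
    have hx1 : (WithLp.equiv 2 _ xH).1 = f' := rfl
    have hx2 : (WithLp.equiv 2 _ xH).2 = g' := rfl
    have hxm : xH ∈ Ssub Ω := by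
      rw [mem_Ssub, hx1, hx2]
      exact isWeakGrad_congr hfg.1.coeFn_toLp.symm hfg.2.1.coeFn_toLp.symm hfg.2.2
    have h1 : F f g = Flin ⟨xH, hxm⟩ := by
      show F f g = F (⇑((WithLp.equiv 2 _ xH).1)) (⇑((WithLp.equiv 2 _ xH).2))
      rw [hx1, hx2]
      exact (F_congr_thm F hadd C hbound f g _ _ hfg hfg.1.coeFn_toLp hfg.2.1.coeFn_toLp).symm
    have h2 : Flin ⟨xH, hxm⟩ = G xH := by
      rw [hG ⟨xH, hxm⟩]
      rfl
    have h3 : G xH = ⟪y, xH⟫ := by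
      rw [hy, InnerProductSpace.toDual_symm_apply]
    have h4 : (⟪y, xH⟫ : ℝ) = ⟪hL, f'⟫ + ⟪vL, g'⟫ := by
      rw [WithLp.prod_inner_apply]
      rfl
    have h5 : (⟪hL, f'⟫ : ℝ) = ∫ x in Ω, f x * (⇑hL) x := by
      rw [L2.inner_def]
      refine integral_congr_ae ?_
      filter_upwards [hfg.1.coeFn_toLp] with x hx
      simp only [RCLike.inner_apply, conj_trivial]
      rw [hx, mul_comm]
    have h6 : (⟪vL, g'⟫ : ℝ) = ∫ x in Ω, ⟪g x, (⇑vL) x⟫ := by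
      rw [L2.inner_def]
      refine integral_congr_ae ?_
      filter_upwards [hfg.2.1.coeFn_toLp] with x hx
      rw [hx, real_inner_comm]
    rw [h1, h2, h3, h4, h5, h6]
    ring
  refine ⟨⇑vL, ⇑hL, Lp.memLp _, Lp.memLp _, ?_, hrep⟩
  intro φ hφ h2φ hsφ
  have hInW : InW Ω φ (gradient φ) :=
    ⟨memL2_of_cont_cs hφ.continuous h2φ,
     memL2_of_cont_cs (grad_continuous hφ) (grad_compact_support h2φ),
     isWeakGrad_of_smooth hφ h2φ⟩
  have h0 := hrep φ (gradient φ) hInW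
  rw [hvanish φ hφ h2φ hsφ] at h0
  have e1 : ∫ x in Ω, ⟪(⇑vL) x, gradient φ x⟫ = ∫ x in Ω, ⟪gradient φ x, (⇑vL) x⟫ :=
    integral_congr_ae (Eventually.of_forall fun x => real_inner_comm _ _)
  have e2 : ∫ x in Ω, (⇑hL) x * φ x = ∫ x in Ω, φ x * (⇑hL) x :=
    integral_congr_ae (Eventually.of_forall fun x => mul_comm _ _)
  rw [e1, e2]
  linarith
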